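/- Let X and Y be Banach spaces such that X has type p, with 1 ≤ p ≤ 2, and let u : X → Y be a continuous linear operator whose adjoint u* is almost p*-summing. Then u is Cohen strongly p-summing. -/

import Mathlib

open MeasureTheory Finset Filter
open scoped ENNReal NNReal

noncomputable section

universe u v

/-- The `i`-th Rademacher function. -/
def rademacher (i : ℕ) (t : ℝ) : ℝ :=
  if Int.fract ((2 : ℝ) ^ i * t) < 1 / 2 then 1 else -1

/-- The Rademacher (`Rad`) norm of the first `m` terms of a sequence:
`(∫_0^1 ‖∑_{i<m} r_i(t) x_i‖² dt)^{1/2}`. -/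
def radNorm {Z : Type u} [NormedAddCommGroup Z] [NormedSpace ℝ Z] (m : ℕ) (x : ℕ → Z) : ℝ :=
  (∫ t in (0:ℝ)..1, ‖∑ i ∈ Finset.range m, rademacher i t • x i‖ ^ 2) ^ ((1:ℝ) / 2)

/-- Conjugate exponent in `ℝ≥0∞` (`conjExp p = p*`, `1/p + 1/p* = 1`). -/
def conjExp (p : ℝ≥0∞) : ℝ≥0∞ := (1 - p⁻¹)⁻¹

/-- Finite strong `ℓ_q` norm `‖(x_i)_{i<m}‖_q` (sup norm if `q = ∞`). -/
def lpNormFin {Z : Type u} [NormedAddCommGroup Z] (q : ℝ≥0∞) (m : ℕ) (x : ℕ → Z) : ℝ :=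
  if q = ∞ then ⨆ i : Fin m, ‖x (i : ℕ)‖
  else (∑ i ∈ Finset.range m, ‖x i‖ ^ q.toReal) ^ (1 / q.toReal)

/-- Finite weak `ℓ_q` norm `‖(x_i)_{i<m}‖_{w,q}`. -/
def weakNorm {Z : Type u} [NormedAddCommGroup Z] [NormedSpace ℝ Z] (q : ℝ≥0∞) (m : ℕ)
    (x : ℕ → Z) : ℝ :=
  if q = ∞ then ⨆ i : Fin m, ‖x (i : ℕ)‖
  else ⨆ φ : {φ : Z →L[ℝ] ℝ // ‖φ‖ ≤ 1},
    (∑ i ∈ Finset.range m, |φ.1 (x i)| ^ q.toReal) ^ (1 / q.toReal)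

/-- Membership in `Rad(Z)`: almost unconditionally summable sequences. -/
def MemRad {Z : Type u} [NormedAddCommGroup Z] [NormedSpace ℝ Z] (x : ℕ → Z) : Prop :=
  ∃ C, ∀ m, radNorm m x ≤ C

/-- Weakly `q`-summable sequences `ℓ_q^w(Z)`. -/
def MemWeakLp {Z : Type u} [NormedAddCommGroup Z] [NormedSpace ℝ Z] (q : ℝ≥0∞)
    (x : ℕ → Z) : Prop :=
  ∃ C, ∀ m, weakNorm q m x ≤ C

/-- Absolutely `p`-summable sequences `ℓ_p(Z)` (bounded sequences if `p = ∞`). -/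
def MemStrongLp {Z : Type u} [NormedAddCommGroup Z] (p : ℝ≥0∞) (x : ℕ → Z) : Prop :=
  if p = ∞ then ∃ C, ∀ i, ‖x i‖ ≤ C else Summable fun i => ‖x i‖ ^ p.toReal

/-- Cohen strongly `p`-summable sequences `ℓ_p⟨Z⟩`. -/
def MemCohen {Z : Type u} [NormedAddCommGroup Z] [NormedSpace ℝ Z] (p : ℝ≥0∞)
    (y : ℕ → Z) : Prop :=
  ∀ φ : ℕ → (Z →L[ℝ] ℝ), MemWeakLp (conjExp p) φ → Summable fun i => |φ i (y i)|

/-- Almost `p`-summing operators. -/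
def IsAlmostPSumming {Z : Type u} {W : Type v} [NormedAddCommGroup Z] [NormedSpace ℝ Z]
    [NormedAddCommGroup W] [NormedSpace ℝ W] (p : ℝ≥0∞) (u : Z →L[ℝ] W) : Prop :=
  ∃ C, 0 ≤ C ∧ ∀ m (x : ℕ → Z), radNorm m (fun i => u (x i)) ≤ C * weakNorm p m x

/-- The almost `p`-summing norm `π_{al.s.p}(u)`. -/
def almostNorm {Z : Type u} {W : Type v} [NormedAddCommGroup Z] [NormedSpace ℝ Z]
    [NormedAddCommGroup W] [NormedSpace ℝ W] (p : ℝ≥0∞) (u : Z →L[ℝ] W) : ℝ :=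
  sInf {C | 0 ≤ C ∧ ∀ m (x : ℕ → Z), radNorm m (fun i => u (x i)) ≤ C * weakNorm p m x}

/-- Absolutely `p`-summing operators (every operator is `∞`-summing by convention). -/
def IsPSumming {Z : Type u} {W : Type v} [NormedAddCommGroup Z] [NormedSpace ℝ Z]
    [NormedAddCommGroup W] [NormedSpace ℝ W] (p : ℝ≥0∞) (u : Z →L[ℝ] W) : Prop :=
  if p = ∞ then True
  else ∀ x : ℕ → Z, MemWeakLp p x → Summable fun i => ‖u (x i)‖ ^ p.toReal

/-- Cohen strongly `q`-summing with constant `C`. -/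
def IsCohenStrongWith {Z : Type u} {W : Type v} [NormedAddCommGroup Z] [NormedSpace ℝ Z]
    [NormedAddCommGroup W] [NormedSpace ℝ W] (q : ℝ≥0∞) (C : ℝ) (u : Z →L[ℝ] W) : Prop :=
  ∀ m (x : ℕ → Z) (φ : ℕ → (W →L[ℝ] ℝ)),
    ∑ i ∈ Finset.range m, |φ i (u (x i))| ≤ C * lpNormFin q m x * weakNorm (conjExp q) m φ

/-- Cohen strongly `q`-summing operators. -/
def IsCohenStrong {Z : Type u} {W : Type v} [NormedAddCommGroup Z] [NormedSpace ℝ Z]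
    [NormedAddCommGroup W] [NormedSpace ℝ W] (q : ℝ≥0∞) (u : Z →L[ℝ] W) : Prop :=
  ∃ C, 0 ≤ C ∧ IsCohenStrongWith q C u

/-- The Banach space adjoint `u* : W* → Z*`. -/
def adj {Z : Type u} {W : Type v} [NormedAddCommGroup Z] [NormedSpace ℝ Z]
    [NormedAddCommGroup W] [NormedSpace ℝ W] (u : Z →L[ℝ] W) :
    (W →L[ℝ] ℝ) →L[ℝ] (Z →L[ℝ] ℝ) :=
  (ContinuousLinearMap.compSL Z W ℝ (RingHom.id ℝ) (RingHom.id ℝ)).flip u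

/-- `Z` has type `p` with constant `C`. -/
def HasTypeWith (p : ℝ≥0∞) (C : ℝ) (Z : Type u) [NormedAddCommGroup Z] [NormedSpace ℝ Z] :
    Prop :=
  ∀ m (x : ℕ → Z), radNorm m x ≤ C * lpNormFin p m x

/-- `Z` has type `p`. -/
def HasTypeP (p : ℝ≥0∞) (Z : Type u) [NormedAddCommGroup Z] [NormedSpace ℝ Z] : Prop :=
  ∃ C, 0 ≤ C ∧ HasTypeWith p C Z

/-- The type-`p` constant `T_p(Z)`. -/
def typeConst (p : ℝ≥0∞) (Z : Type u) [NormedAddCommGroup Z] [NormedSpace ℝ Z] : ℝ :=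
  sInf {C | 0 ≤ C ∧ HasTypeWith p C Z}

/-- `Z` is an `L_p`-space with constant `lam`. -/
def IsLpSpaceWith (p : ℝ≥0∞) [Fact (1 ≤ p)] (lam : ℝ) (Z : Type u) [NormedAddCommGroup Z]
    [NormedSpace ℝ Z] : Prop :=
  ∀ E : Submodule ℝ Z, FiniteDimensional ℝ E →
    ∃ F : Submodule ℝ Z, E ≤ F ∧ FiniteDimensional ℝ F ∧
      ∃ v : F ≃L[ℝ] PiLp p (fun _ : Fin (Module.finrank ℝ F) => ℝ),
        ‖(v : F →L[ℝ] PiLp p (fun _ : Fin (Module.finrank ℝ F) => ℝ))‖ *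
          ‖(v.symm : PiLp p (fun _ : Fin (Module.finrank ℝ F) => ℝ) →L[ℝ] F)‖ ≤ lam

/-- `Z` is an `L_p`-space. -/
def IsLpSpace (p : ℝ≥0∞) [Fact (1 ≤ p)] (Z : Type u) [NormedAddCommGroup Z]
    [NormedSpace ℝ Z] : Prop :=
  ∃ lam : ℝ, 1 < lam ∧ IsLpSpaceWith p lam Z

/-- `Z` is isomorphic to a Hilbert space. -/
def IsomorphicToHilbert (Z : Type u) [NormedAddCommGroup Z] [NormedSpace ℝ Z] : Prop :=
  ∃ ι : Type u, Nonempty (Z ≃L[ℝ] lp (fun _ : ι => ℝ) 2)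

/-- `Z` is isomorphic to a closed subspace of some `L_r(μ)`. -/
def IsomorphicToClosedSubspaceLp (r : ℝ≥0∞) [Fact (1 ≤ r)] (Z : Type u)
    [NormedAddCommGroup Z] [NormedSpace ℝ Z] : Prop :=
  ∃ (Ω : Type) (mΩ : MeasurableSpace Ω) (μ : @MeasureTheory.Measure Ω mΩ)
    (S : Submodule ℝ (@MeasureTheory.Lp Ω ℝ mΩ _ r μ)),
    IsClosed (S : Set (@MeasureTheory.Lp Ω ℝ mΩ _ r μ)) ∧ Nonempty (Z ≃L[ℝ] S)

/-! Choose signs `ε_i = ±1` with `ε_i φ_i(u x_i) = |φ_i(u x_i)|`. Since the Rademacher functions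
are orthonormal in `L²[0,1]`,
  `∑ (u* φ_i)(ε_i x_i) = ∫₀¹ (∑ r_i(t) u* φ_i)(∑ r_j(t) ε_j x_j) dt`,
which by Cauchy–Schwarz is at most the Rademacher norm of `(u* φ_i)` times that of `(ε_i x_i)`.
The first is at most `C ‖(φ_i)‖_{w,p*}` because `u*` is almost `p*`-summing, the second at most
`T_p(X) ‖(x_i)‖_p` because `X` has type `p`. The orthonormality comes from periodicity: for
`i < j`, `r_i r_j` is `r_0 r_{j-i}` rescaled by `2^i`, and `r_0 r_{j-i}` changes sign under a shift
by `1/2`. -/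

lemma Int.fract_add_half_lt_half_iff {R : Type*} [Field R] [LinearOrder R] [IsStrictOrderedRing R]
    [FloorRing R] (s : R) :
    Int.fract (s + 1 / 2) < 1 / 2 ↔ 1 / 2 ≤ Int.fract s := by
  have h0 := Int.fract_nonneg s
  have h1 := Int.fract_lt_one s
  have hs := Int.fract_add_floor s
  rcases lt_or_ge (Int.fract s) (1 / 2) with h | h
  · have : Int.fract (s + 1 / 2) = Int.fract s + 1 / 2 :=
      Int.fract_eq_iff.2 ⟨by linarith, by linarith, ⌊s⌋, by linarith⟩
    constructor <;> intro <;> linarith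
  · have : Int.fract (s + 1 / 2) = Int.fract s - 1 / 2 :=
      Int.fract_eq_iff.2 ⟨by linarith, by linarith, ⌊s⌋ + 1, by push_cast; linarith⟩
    constructor <;> intro <;> linarith

theorem Function.Antiperiodic.intervalIntegral_add_two_mul_eq_zero {E : Type*}
    [NormedAddCommGroup E] [NormedSpace ℝ E] {f : ℝ → E} {c : ℝ} (hf : Function.Antiperiodic f c)
    (h_int : ∀ t₁ t₂, IntervalIntegrable f volume t₁ t₂) (t : ℝ) :
    ∫ x in t..t + 2 * c, f x = 0 := by
  have hshift : ∫ x in t + c..t + 2 * c, f x = -∫ x in t..t + c, f x := by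
    calc ∫ x in t + c..t + 2 * c, f x = ∫ x in t..t + c, f (x + c) := by
          rw [intervalIntegral.integral_comp_add_right]; ring_nf
      _ = -∫ x in t..t + c, f x := by simp only [hf _, intervalIntegral.integral_neg]
  rw [← intervalIntegral.integral_add_adjacent_intervals (h_int t (t + c)) (h_int _ _), hshift,
    add_neg_cancel]

theorem Function.Periodic.intervalIntegral_comp_nat_mul {E : Type*}
    [NormedAddCommGroup E] [NormedSpace ℝ E] {f : ℝ → E} {T : ℝ} (hf : Function.Periodic f T)
    (h_int : ∀ t₁ t₂, IntervalIntegrable f volume t₁ t₂) {n : ℕ} (hn : n ≠ 0) :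
    ∫ x in 0..T, f (n * x) = ∫ x in 0..T, f x := by
  have hn' : (n : ℝ) ≠ 0 := Nat.cast_ne_zero.2 hn
  have hsum := hf.intervalIntegral_add_zsmul_eq n 0 h_int
  rw [zero_add, zero_add, natCast_zsmul, natCast_zsmul] at hsum
  rw [intervalIntegral.integral_comp_mul_left f hn', mul_zero, ← nsmul_eq_mul, hsum,
    ← Nat.cast_smul_eq_nsmul ℝ, inv_smul_smul₀ hn']

theorem intervalIntegral_mul_le_L2_mul_L2_of_nonneg {f g : ℝ → ℝ} {a b : ℝ} (hab : a ≤ b)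
    (hf0 : 0 ≤ f) (hg0 : 0 ≤ g) (hf : MemLp f 2 (volume.restrict (Set.Ioc a b)))
    (hg : MemLp g 2 (volume.restrict (Set.Ioc a b))) :
    ∫ t in a..b, f t * g t ≤
      (∫ t in a..b, f t ^ 2) ^ ((1 : ℝ) / 2) * (∫ t in a..b, g t ^ 2) ^ ((1 : ℝ) / 2) := by
  simp only [intervalIntegral.integral_of_le hab, ← Real.rpow_two]
  exact integral_mul_le_Lp_mul_Lq_of_nonneg Real.HolderConjugate.two_two (ae_of_all _ hf0)
    (ae_of_all _ hg0) (by simpa using hf) (by simpa using hg)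

lemma rademacher_add (i k : ℕ) (t : ℝ) : rademacher (i + k) t = rademacher k (2 ^ i * t) := by
  unfold rademacher
  rw [pow_add, mul_comm ((2 : ℝ) ^ i), mul_assoc]

lemma rademacher_periodic (n : ℕ) : Function.Periodic (rademacher n) (2 ^ n)⁻¹ := fun t => by
  unfold rademacher
  rw [mul_add, mul_inv_cancel₀ (by positivity), Int.fract_add_one]

lemma rademacher_antiperiodic (n : ℕ) :
    Function.Antiperiodic (rademacher n) (2 ^ (n + 1))⁻¹ := fun t => by
  have : (2 : ℝ) ^ n * (t + (2 ^ (n + 1))⁻¹) = 2 ^ n * t + 1 / 2 := by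
    rw [pow_succ]; field_simp
  unfold rademacher
  simp only [this, Int.fract_add_half_lt_half_iff]
  split_ifs <;> norm_num <;> linarith

lemma rademacher_mul_self (i : ℕ) (t : ℝ) : rademacher i t * rademacher i t = 1 := by
  unfold rademacher
  split_ifs <;> norm_num

lemma abs_rademacher (i : ℕ) (t : ℝ) : |rademacher i t| = 1 := by
  unfold rademacher
  split_ifs <;> norm_num

@[fun_prop]
lemma measurable_rademacher (i : ℕ) : Measurable (rademacher i) :=
  Measurable.ite (measurableSet_lt (by fun_prop) measurable_const) measurable_const measurable_const

lemma intervalIntegrable_rademacher_mul (i j : ℕ) (a b : ℝ) :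
    IntervalIntegrable (fun t => rademacher i t * rademacher j t) volume a b :=
  (intervalIntegrable_const (c := (1 : ℝ))).mono_fun'
    ((measurable_rademacher i).mul (measurable_rademacher j)).aestronglyMeasurable
    (ae_of_all _ fun t => by simp [abs_rademacher])

lemma integral_rademacher_mul_of_lt {i j : ℕ} (hij : i < j) :
    ∫ t in (0 : ℝ)..1, rademacher i t * rademacher j t = 0 := by
  obtain ⟨k, rfl⟩ := Nat.exists_eq_add_of_lt hij
  set g : ℝ → ℝ := fun s => rademacher 0 s * rademacher (k + 1) s with hg_def
  -- `g` changes sign under `s ↦ s + 1/2`: `r_0` does, while `r_{k+1}` has period `1/2`.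
  have hg : Function.Antiperiodic g 2⁻¹ := fun s => by
    have h0 := rademacher_antiperiodic 0 s
    have h1 := (rademacher_periodic (k + 1)).nat_mul (2 ^ k) s
    rw [zero_add, pow_one] at h0
    rw [Nat.cast_pow, Nat.cast_ofNat, pow_succ, ← div_eq_mul_inv,
      div_mul_cancel_left₀ (by positivity)] at h1
    simp only [hg_def, h0, h1, neg_mul]
  have hg_int : ∀ a b, IntervalIntegrable g volume a b :=
    intervalIntegrable_rademacher_mul 0 (k + 1)
  have hg_per : Function.Periodic g 1 := by simpa using hg.periodic_two_mul
  calc ∫ t in (0 : ℝ)..1, rademacher i t * rademacher (i + k + 1) t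
      = ∫ t in (0 : ℝ)..1, g ((2 ^ i : ℕ) * t) := by
        simp only [hg_def, Nat.cast_pow, Nat.cast_ofNat, ← rademacher_add, add_zero, add_assoc]
    _ = ∫ t in (0 : ℝ)..1, g t := hg_per.intervalIntegral_comp_nat_mul hg_int (by positivity)
    _ = 0 := by simpa using hg.intervalIntegral_add_two_mul_eq_zero hg_int 0

lemma integral_rademacher_mul (i j : ℕ) :
    ∫ t in (0 : ℝ)..1, rademacher i t * rademacher j t = if i = j then 1 else 0 := by
  rcases lt_trichotomy i j with h | rfl | h
  · rw [integral_rademacher_mul_of_lt h, if_neg h.ne]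
  · simp [rademacher_mul_self]
  · simp_rw [mul_comm (rademacher i _)]
    rw [integral_rademacher_mul_of_lt h, if_neg h.ne']

section RademacherSum

variable {E : Type*} [NormedAddCommGroup E] [NormedSpace ℝ E]

def rademacherSum (m : ℕ) (x : ℕ → E) (t : ℝ) : E :=
  ∑ i ∈ Finset.range m, rademacher i t • x i

@[fun_prop]
lemma stronglyMeasurable_rademacherSum (m : ℕ) (x : ℕ → E) :
    StronglyMeasurable (rademacherSum m x) := by
  unfold rademacherSum; fun_prop

lemma norm_rademacherSum_le (m : ℕ) (x : ℕ → E) (t : ℝ) :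
    ‖rademacherSum m x t‖ ≤ ∑ i ∈ Finset.range m, ‖x i‖ :=
  (norm_sum_le _ _).trans <| Finset.sum_le_sum fun i _ => by
    rw [norm_smul, Real.norm_eq_abs, abs_rademacher, one_mul]

lemma memLp_norm_rademacherSum (m : ℕ) (x : ℕ → E) (p : ℝ≥0∞) (μ : Measure ℝ)
    [IsFiniteMeasure μ] : MemLp (fun t => ‖rademacherSum m x t‖) p μ :=
  MemLp.of_bound (by fun_prop) _ <| ae_of_all _ fun t => by
    simpa using norm_rademacherSum_le m x t

lemma rademacherSum_apply_rademacherSum (m : ℕ) (ψ : ℕ → E →L[ℝ] ℝ) (z : ℕ → E) (t : ℝ) :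
    rademacherSum m ψ t (rademacherSum m z t) =
      ∑ i ∈ Finset.range m, ∑ j ∈ Finset.range m,
        (rademacher i t * rademacher j t) * ψ i (z j) := by
  simp only [rademacherSum, _root_.sum_apply, map_sum, FunLike.coe_smul,
    Pi.smul_apply, map_smul, smul_eq_mul, Finset.mul_sum]
  rw [Finset.sum_comm]
  exact Finset.sum_congr rfl fun i _ => Finset.sum_congr rfl fun j _ => by ring

lemma integral_rademacherSum_apply_rademacherSum (m : ℕ) (ψ : ℕ → E →L[ℝ] ℝ) (z : ℕ → E) :
    ∫ t in (0 : ℝ)..1, rademacherSum m ψ t (rademacherSum m z t) =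
      ∑ i ∈ Finset.range m, ψ i (z i) := by
  have hint : ∀ i j, IntervalIntegrable
      (fun t => (rademacher i t * rademacher j t) * ψ i (z j)) volume 0 1 :=
    fun i j => (intervalIntegrable_rademacher_mul i j 0 1).mul_const _
  have hint_row : ∀ i, IntervalIntegrable
      (fun t => ∑ j ∈ Finset.range m, (rademacher i t * rademacher j t) * ψ i (z j)) volume 0 1 :=
    fun i => by simpa only [Finset.sum_fn] using IntervalIntegrable.sum _ fun j _ => hint i j
  simp only [rademacherSum_apply_rademacherSum]
  rw [intervalIntegral.integral_finsetSum fun i _ => hint_row i]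
  refine Finset.sum_congr rfl fun i hi => ?_
  simp only [intervalIntegral.integral_finsetSum fun j _ => hint i j,
    intervalIntegral.integral_mul_const, integral_rademacher_mul, ite_mul, one_mul, zero_mul,
    Finset.sum_ite_eq, hi, if_true]

lemma sum_apply_le_radNorm_mul_radNorm (m : ℕ) (ψ : ℕ → E →L[ℝ] ℝ) (z : ℕ → E) :
    ∑ i ∈ Finset.range m, ψ i (z i) ≤ radNorm m ψ * radNorm m z := by
  have hF := memLp_norm_rademacherSum m ψ 2 (volume.restrict (Set.Ioc 0 1))
  have hG := memLp_norm_rademacherSum m z 2 (volume.restrict (Set.Ioc 0 1))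
  have hFG : IntervalIntegrable (fun t => ‖rademacherSum m ψ t‖ * ‖rademacherSum m z t‖)
      volume 0 1 :=
    (intervalIntegrable_iff_integrableOn_Ioc_of_le zero_le_one).2 (hF.integrable_mul hG)
  have hpairing : IntervalIntegrable (fun t => rademacherSum m ψ t (rademacherSum m z t))
      volume 0 1 :=
    hFG.mono_fun' (isBoundedBilinearMap_apply.continuous.comp_stronglyMeasurable
        ((stronglyMeasurable_rademacherSum m ψ).prodMk
          (stronglyMeasurable_rademacherSum m z))).aestronglyMeasurable
      (ae_of_all _ fun t => (rademacherSum m ψ t).le_opNorm _)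
  rw [← integral_rademacherSum_apply_rademacherSum]
  calc ∫ t in (0 : ℝ)..1, rademacherSum m ψ t (rademacherSum m z t)
      ≤ ∫ t in (0 : ℝ)..1, ‖rademacherSum m ψ t‖ * ‖rademacherSum m z t‖ :=
        intervalIntegral.integral_mono_on zero_le_one hpairing hFG fun t _ =>
          (le_abs_self _).trans ((rademacherSum m ψ t).le_opNorm _)
    _ ≤ radNorm m ψ * radNorm m z :=
        intervalIntegral_mul_le_L2_mul_L2_of_nonneg zero_le_one (fun _ => norm_nonneg _)
          (fun _ => norm_nonneg _) hF hG

end RademacherSum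

lemma lpNormFin_congr_norm {Z W : Type*} [NormedAddCommGroup Z] [NormedAddCommGroup W]
    (q : ℝ≥0∞) (m : ℕ) {x : ℕ → Z} {y : ℕ → W} (h : ∀ i, ‖x i‖ = ‖y i‖) :
    lpNormFin q m x = lpNormFin q m y := by
  simp only [lpNormFin, h]

lemma radNorm_nonneg {Z : Type*} [NormedAddCommGroup Z] [NormedSpace ℝ Z] (m : ℕ) (x : ℕ → Z) :
    0 ≤ radNorm m x :=
  Real.rpow_nonneg (intervalIntegral.integral_nonneg zero_le_one fun _ _ => by positivity) _

lemma weakNorm_nonneg {Z : Type*} [NormedAddCommGroup Z] [NormedSpace ℝ Z] (q : ℝ≥0∞)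
    (m : ℕ) (x : ℕ → Z) : 0 ≤ weakNorm q m x := by
  unfold weakNorm
  split
  · exact Real.iSup_nonneg fun i => norm_nonneg _
  · exact Real.iSup_nonneg fun φ => by positivity

lemma adj_apply {Z W : Type*} [NormedAddCommGroup Z] [NormedSpace ℝ Z] [NormedAddCommGroup W]
    [NormedSpace ℝ W] (u : Z →L[ℝ] W) (φ : W →L[ℝ] ℝ) (x : Z) : adj u φ x = φ (u x) := rfl

lemma exists_abs_eq_one_mul_eq_abs (a : ℝ) : ∃ ε : ℝ, |ε| = 1 ∧ ε * a = |a| := by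
  rcases le_or_gt 0 a with h | h
  · exact ⟨1, by simp, by simp [abs_of_nonneg h]⟩
  · exact ⟨-1, by simp, by simp [abs_of_neg h]⟩

theorem stmt2_general {X : Type u} {Y : Type v} [NormedAddCommGroup X] [NormedSpace ℝ X]
    [NormedAddCommGroup Y] [NormedSpace ℝ Y]
    (p : ℝ≥0∞) (hX : HasTypeP p X) (u : X →L[ℝ] Y)
    (hu : IsAlmostPSumming (conjExp p) (adj u)) :
    IsCohenStrong p u := by
  obtain ⟨Cx, hCx0, hCx⟩ := hX
  obtain ⟨Cu, hCu0, hCu⟩ := hu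
  refine ⟨Cu * Cx, mul_nonneg hCu0 hCx0, fun m x φ => ?_⟩
  choose ε hε_abs hε using fun i => exists_abs_eq_one_mul_eq_abs (φ i (u (x i)))
  have hnorm : ∀ i, ‖ε i • x i‖ = ‖x i‖ := fun i => by
    rw [norm_smul, Real.norm_eq_abs, hε_abs, one_mul]
  calc ∑ i ∈ Finset.range m, |φ i (u (x i))|
      = ∑ i ∈ Finset.range m, adj u (φ i) (ε i • x i) :=
        Finset.sum_congr rfl fun i _ => by rw [adj_apply, map_smul, map_smul, smul_eq_mul, hε]
    _ ≤ radNorm m (fun i => adj u (φ i)) * radNorm m (fun i => ε i • x i) :=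
        sum_apply_le_radNorm_mul_radNorm m _ _
    _ ≤ (Cu * weakNorm (conjExp p) m φ) * (Cx * lpNormFin p m (fun i => ε i • x i)) :=
        mul_le_mul (hCu m φ) (hCx m _) (radNorm_nonneg m _)
          (mul_nonneg hCu0 (weakNorm_nonneg _ _ _))
    _ = Cu * Cx * lpNormFin p m x * weakNorm (conjExp p) m φ := by
        rw [lpNormFin_congr_norm p m hnorm]; ring

/-- If `X` has type `p` (`1 ≤ p ≤ 2`) and `u*` is almost `p*`-summing,
then `u` is Cohen strongly `p`-summing. -/
theorem stmt2 {X : Type u} {Y : Type v} [NormedAddCommGroup X] [NormedSpace ℝ X]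
    [CompleteSpace X] [NormedAddCommGroup Y] [NormedSpace ℝ Y] [CompleteSpace Y]
    (p : ℝ≥0∞) (hp1 : 1 ≤ p) (hp2 : p ≤ 2) (hX : HasTypeP p X) (u : X →L[ℝ] Y)
    (hu : IsAlmostPSumming (conjExp p) (adj u)) :
    IsCohenStrong p u :=
  stmt2_general p hX u hu
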